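/- For any pair of discrete random variables (X, Y) with X taking values in a countably infinite alphabet, and every k ≥ 1, ∑_{x=1}^{k} P_X↓(x) ≤ E[ ∑_{x=1}^{k} P_{X|Y}↓(x) ], where P↓ denotes decreasing rearrangement. -/

import Mathlib

/-!
For a fixed set `s` of `k` symbols, `P_X(s) = E[P_{X|Y}(s)]` by exchanging the finite sum over `s`
with the expectation over `Y`, and `P_{X|Y}(s)` is at most the sum of the `k` largest conditional
probabilities. Taking the supremum over `s` gives the claim.
-/

noncomputable section

def IsPmf {α : Type*} (p : α → ℝ) : Prop := (∀ x, 0 ≤ p x) ∧ ∑' x, p x = 1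

def topSum (p : ℕ → ℝ) (k : ℕ) : ℝ :=
  sSup {t : ℝ | ∃ s : Finset ℕ, s.card = k ∧ t = ∑ x ∈ s, p x}

namespace IsPmf

variable {α : Type*} {p : α → ℝ}

lemma summable (hp : IsPmf p) : Summable p := by
  by_contra h
  simpa [tsum_eq_zero_of_not_summable h] using hp.2

lemma sum_le_one (hp : IsPmf p) (s : Finset α) : ∑ x ∈ s, p x ≤ 1 :=
  hp.2 ▸ hp.summable.sum_le_tsum s fun x _ => hp.1 x

lemma le_one (hp : IsPmf p) (x : α) : p x ≤ 1 := by
  simpa using hp.sum_le_one {x}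

end IsPmf

lemma summable_mul_of_nonneg_of_le_one {β : Type*} {q f : β → ℝ} (hq : Summable q)
    (hq0 : ∀ y, 0 ≤ q y) (hf0 : ∀ y, 0 ≤ f y) (hf1 : ∀ y, f y ≤ 1) :
    Summable fun y => q y * f y :=
  hq.of_nonneg_of_le (fun y => mul_nonneg (hq0 y) (hf0 y))
    fun y => mul_le_of_le_one_right (hq0 y) (hf1 y)

section topSum

variable {p : ℕ → ℝ} {k : ℕ}

lemma topSum_le {c : ℝ} (h : ∀ s : Finset ℕ, s.card = k → ∑ x ∈ s, p x ≤ c) :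
    topSum p k ≤ c :=
  csSup_le ⟨_, Finset.range k, Finset.card_range k, rfl⟩ <| by
    rintro t ⟨s, hs, rfl⟩
    exact h s hs

lemma sum_le_topSum (hp : IsPmf p) {s : Finset ℕ} (hs : s.card = k) :
    ∑ x ∈ s, p x ≤ topSum p k :=
  le_csSup ⟨1, by rintro t ⟨s, -, rfl⟩; exact hp.sum_le_one s⟩ ⟨s, hs, rfl⟩

lemma topSum_nonneg (hp : IsPmf p) (k : ℕ) : 0 ≤ topSum p k :=
  (Finset.sum_nonneg fun x _ => hp.1 x).trans (sum_le_topSum hp (Finset.card_range k))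

lemma topSum_le_one (hp : IsPmf p) (k : ℕ) : topSum p k ≤ 1 :=
  topSum_le fun s _ => hp.sum_le_one s

end topSum

/-- For any pair `(X,Y)` (given by the distribution `q` of `Y` and the
conditional distributions `W y = P_{X|Y=y}`), and every `k ≥ 1`,
`∑_{x=1}^k P_X↓(x) ≤ E[∑_{x=1}^k P_{X|Y}↓(x)]`. -/
theorem stmt_5 {β : Type*} (q : β → ℝ) (W : β → ℕ → ℝ)
    (hq : IsPmf q) (hW : ∀ y, IsPmf (W y)) :
    ∀ k, topSum (fun x => ∑' y, q y * W y x) k ≤ ∑' y, q y * topSum (W y) k := by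
  intro k
  have summable_weighted {f : β → ℝ} (hf0 : ∀ y, 0 ≤ f y) (hf1 : ∀ y, f y ≤ 1) :
      Summable fun y => q y * f y :=
    summable_mul_of_nonneg_of_le_one hq.summable hq.1 hf0 hf1
  refine topSum_le fun s hs => ?_
  calc ∑ x ∈ s, ∑' y, q y * W y x = ∑' y, q y * ∑ x ∈ s, W y x := by
        rw [← Summable.tsum_finsetSum fun x _ =>
          summable_weighted (fun y => (hW y).1 x) fun y => (hW y).le_one x]
        simp only [Finset.mul_sum]
    _ ≤ ∑' y, q y * topSum (W y) k :=
        Summable.tsum_le_tsum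
          (fun y => mul_le_mul_of_nonneg_left (sum_le_topSum (hW y) hs) (hq.1 y))
          (summable_weighted (fun y => Finset.sum_nonneg fun x _ => (hW y).1 x)
            fun y => (hW y).sum_le_one s)
          (summable_weighted (fun y => topSum_nonneg (hW y) k) fun y => topSum_le_one (hW y) k)
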